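/- arXiv:1010.2711 — 9 statements merged into one kernel-verified Lean document; each statement's English description precedes it below -/
import Mathlib

section
/- For every positive integer n, the maximum cardinality of a Δ-free family of subsets of [n] is exactly 2^(n-1); that is, there exists a Δ-free family of size 2^(n-1), and no Δ-free family is larger. -/
/-- A family `𝒜` of subsets of `[n]` is Δ-free if for all `A, B ∈ 𝒜`,
the symmetric difference `A ∆ B` is not a member of `𝒜`. -/
def DeltaFree {n : ℕ} (𝒜 : Finset (Finset (Fin n))) : Prop :=
  ∀ A ∈ 𝒜, ∀ B ∈ 𝒜, symmDiff A B ∉ 𝒜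

theorem stmt_4 (n : ℕ) (hn : 0 < n) :
    (∃ 𝒜 : Finset (Finset (Fin n)), DeltaFree 𝒜 ∧ 𝒜.card = 2 ^ (n - 1)) ∧
    (∀ 𝒜 : Finset (Finset (Fin n)), DeltaFree 𝒜 → 𝒜.card ≤ 2 ^ (n - 1)) := by
  have hcardU : Fintype.card (Finset (Fin n)) = 2 ^ n := by
    rw [Fintype.card_finset, Fintype.card_fin]
  have hpow : 2 ^ (n - 1) + 2 ^ (n - 1) = 2 ^ n := by
    have h : n - 1 + 1 = n := Nat.succ_pred_eq_of_pos hn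
    calc 2 ^ (n - 1) + 2 ^ (n - 1) = 2 ^ (n - 1 + 1) := by rw [pow_succ]; omega
      _ = 2 ^ n := by rw [h]
  constructor
  · set i : Fin n := ⟨0, hn⟩ with hi
    refine ⟨((Finset.univ.erase i).powerset).image (insert i), ?_, ?_⟩
    · intro A hA B hB hAB
      simp only [Finset.mem_image, Finset.mem_powerset] at hA hB hAB
      obtain ⟨a, ha, rfl⟩ := hA
      obtain ⟨b, hb, rfl⟩ := hB
      obtain ⟨c, hc, hcA⟩ := hAB
      have h1 : i ∉ symmDiff (insert i a) (insert i b) := by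
        simp [Finset.mem_symmDiff]
      have h2 : i ∈ symmDiff (insert i a) (insert i b) := by
        rw [← hcA]; exact Finset.mem_insert_self _ _
      exact h1 h2
    · rw [Finset.card_image_of_injOn, Finset.card_powerset,
        Finset.card_erase_of_mem (Finset.mem_univ i), Finset.card_univ, Fintype.card_fin]
      intro a ha b hb hab
      simp only [Finset.coe_powerset, Set.mem_preimage, Finset.mem_coe,
        Finset.mem_powerset, Set.mem_setOf_eq] at ha hb
      have hia : i ∉ a := fun h => (Finset.mem_erase.mp (ha h)).1 rfl
      have hib : i ∉ b := fun h => (Finset.mem_erase.mp (hb h)).1 rfl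
      calc a = (insert i a).erase i := by rw [Finset.erase_insert hia]
        _ = (insert i b).erase i := by rw [hab]
        _ = b := Finset.erase_insert hib
  · intro 𝒜 h𝒜
    by_contra hlt
    push_neg at hlt
    have hne : 𝒜.Nonempty := Finset.card_pos.mp (lt_of_le_of_lt (Nat.zero_le _) hlt)
    obtain ⟨A, hA⟩ := hne
    set ℬ := 𝒜.image (fun B => symmDiff A B) with hB
    have hcardB : ℬ.card = 𝒜.card := by
      apply Finset.card_image_of_injective
      exact symmDiff_right_injective A
    have hinter : (𝒜 ∩ ℬ).Nonempty := by
      rw [← Finset.card_pos]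
      by_contra hz
      push_neg at hz
      interval_cases h : (𝒜 ∩ ℬ).card
      have := Finset.card_union_add_card_inter 𝒜 ℬ
      rw [h, add_zero] at this
      have hle : (𝒜 ∪ ℬ).card ≤ 2 ^ n := hcardU ▸ Finset.card_le_univ _
      omega
    obtain ⟨C, hC⟩ := hinter
    rw [Finset.mem_inter] at hC
    obtain ⟨hC𝒜, hCB⟩ := hC
    obtain ⟨B, hB𝒜, hBC⟩ := Finset.mem_image.mp hCB
    exact h𝒜 A hA B hB𝒜 (hBC ▸ hC𝒜)
end

section
/- Let n ≥ 2. If a Δ-free family 𝒜 of subsets of [n] contains at least one set of even cardinality, then 𝒜 contains at most 2^(n-2) sets of odd cardinality. -/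
lemma card_symmDiff' {α : Type*} [DecidableEq α] (s t : Finset α) :
    (symmDiff s t).card + 2 * (s ∩ t).card = s.card + t.card := by
  have h : symmDiff s t = (s \ t) ∪ (t \ s) := by
    rw [symmDiff_def, Finset.sup_eq_union]
  rw [h, Finset.card_union_of_disjoint disjoint_sdiff_sdiff]
  have h1 : (s \ t).card + (s ∩ t).card = s.card := by
    rw [Finset.card_sdiff_add_card_inter]
  have h2 : (t \ s).card + (t ∩ s).card = t.card := by
    rw [Finset.card_sdiff_add_card_inter]
  rw [Finset.inter_comm] at h2
  omega

lemma parity_symmDiff {α : Type*} [DecidableEq α] (s t : Finset α) :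
    (symmDiff s t).card % 2 = (s.card + t.card) % 2 := by
  have := card_symmDiff' s t
  omega

lemma card_odd_subsets (n : ℕ) (hn : 1 ≤ n) :
    ((Finset.univ : Finset (Finset (Fin n))).filter (fun A => Odd A.card)).card
      = 2 ^ (n - 1) := by
  classical
  set T := (Finset.univ : Finset (Finset (Fin n))).filter (fun A => Odd A.card) with hT
  set U := (Finset.univ : Finset (Finset (Fin n))).filter (fun A => ¬ Odd A.card) with hU
  have x0 : Fin n := ⟨0, by omega⟩
  have hmap : T.image (fun A => symmDiff A {x0}) = U := by
    ext B
    simp only [hT, hU, Finset.mem_image, Finset.mem_filter, Finset.mem_univ, true_and]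
    constructor
    · rintro ⟨A, hA, rfl⟩
      have := parity_symmDiff A ({x0} : Finset (Fin n))
      simp only [Finset.card_singleton] at this
      rw [Nat.odd_iff] at hA ⊢
      omega
    · intro hB
      refine ⟨symmDiff B {x0}, ?_, ?_⟩
      · have := parity_symmDiff B ({x0} : Finset (Fin n))
        simp only [Finset.card_singleton] at this
        rw [Nat.odd_iff] at hB ⊢
        omega
      · exact symmDiff_symmDiff_cancel_right {x0} B
  have hcardeq : T.card = U.card := by
    rw [← hmap, Finset.card_image_of_injective _ (symmDiff_left_injective _)]
  have hsum : T.card + U.card = 2 ^ n := by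
    rw [hT, hU, Finset.card_filter_add_card_filter_not]
    simp [Finset.card_univ]
  have : 2 ^ n = 2 * 2 ^ (n - 1) := by
    rw [← pow_succ']
    congr 1
    omega
  omega

theorem stmt_5 (n : ℕ) (hn : 2 ≤ n) (𝒜 : Finset (Finset (Fin n)))
    (hfree : DeltaFree 𝒜) (heven : ∃ A ∈ 𝒜, Even A.card) :
    (𝒜.filter (fun A => Odd A.card)).card ≤ 2 ^ (n - 2) := by
  classical
  obtain ⟨E, hE, hEeven⟩ := heven
  set S := 𝒜.filter (fun A => Odd A.card) with hS
  set T := (Finset.univ : Finset (Finset (Fin n))).filter (fun A => Odd A.card) with hT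
  set S' := S.image (fun A => symmDiff A E) with hS'
  have hScard : S'.card = S.card :=
    Finset.card_image_of_injective _ (symmDiff_left_injective _)
  have hdisj : Disjoint S S' := by
    rw [Finset.disjoint_right]
    rintro B hB hBS
    simp only [hS', Finset.mem_image] at hB
    obtain ⟨A, hA, rfl⟩ := hB
    have hA𝒜 : A ∈ 𝒜 := (Finset.mem_filter.mp hA).1
    have hB𝒜 : symmDiff A E ∈ 𝒜 := (Finset.mem_filter.mp hBS).1
    exact hfree A hA𝒜 E hE hB𝒜
  have hsub : S ∪ S' ⊆ T := by
    intro B hB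
    rcases Finset.mem_union.mp hB with h | h
    · simp only [hT, Finset.mem_filter, Finset.mem_univ, true_and]
      exact (Finset.mem_filter.mp h).2
    · simp only [hS', Finset.mem_image] at h
      obtain ⟨A, hA, rfl⟩ := h
      have hAodd : Odd A.card := (Finset.mem_filter.mp hA).2
      simp only [hT, Finset.mem_filter, Finset.mem_univ, true_and]
      have := parity_symmDiff A E
      rw [Nat.odd_iff] at hAodd ⊢
      rw [Nat.even_iff] at hEeven
      omega
  have hcardT : T.card = 2 ^ (n - 1) := card_odd_subsets n (by omega)
  have h1 : S.card + S'.card ≤ T.card := by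
    rw [← Finset.card_union_of_disjoint hdisj]
    exact Finset.card_le_card hsub
  have h2 : 2 ^ (n - 1) = 2 * 2 ^ (n - 2) := by
    rw [← pow_succ']
    congr 1
    omega
  omega
end

section
/- Let n ≥ 2 and let 𝒜 be a Δ-free family of subsets of [n] with |𝒜| = 2^(n-1). If 𝒜 contains at least one set of even cardinality, then 𝒜 contains exactly 2^(n-2) sets of even cardinality and exactly 2^(n-2) sets of odd cardinality. -/
/-!
Fix `A₀ ∈ 𝒜` of even size. Translation by `A₀` maps `𝒜` injectively into `𝒜ᶜ`, which has the
same size, so `𝒜ᶜ = A₀ ∆ 𝒜`; consequently `H ∆ A ∈ 𝒜` whenever `A ∈ 𝒜` and `H ∉ 𝒜`. Some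
`H ∉ 𝒜` has odd size: otherwise every `A ∈ 𝒜` would be even, being `A₀ ∆ (A₀ ∆ A)`, so every set
would be even, which fails for a singleton. Translation by such an `H` is then a parity-reversing
involution of `𝒜`, which therefore splits evenly into sets of even and of odd size.
-/

open Finset
open scoped symmDiff

namespace Finset

variable {α : Type*} [DecidableEq α]

theorem card_symmDiff_add_two_mul_card_inter (s t : Finset α) :
    #(s ∆ t) + 2 * #(s ∩ t) = #s + #t := by
  rw [symmDiff_eq_sup_sdiff_inf, sup_eq_union, inf_eq_inter,
    card_sdiff_of_subset inter_subset_union, ← card_union_add_card_inter]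
  have := card_le_card (inter_subset_union (s := s) (t := t))
  omega

theorem even_card_symmDiff_iff (s t : Finset α) :
    Even #(s ∆ t) ↔ (Even #s ↔ Even #t) := by
  have := card_symmDiff_add_two_mul_card_inter s t
  simp only [Nat.even_iff]
  omega

end Finset

namespace DeltaFree

variable {n : ℕ} {𝒜 : Finset (Finset (Fin n))}

theorem image_symmDiff_eq_compl (hfree : DeltaFree 𝒜) (hhalf : 2 ^ n ≤ 2 * #𝒜)
    {A : Finset (Fin n)} (hA : A ∈ 𝒜) : 𝒜.image (A ∆ ·) = 𝒜ᶜ := by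
  refine eq_of_subset_of_card_le ?_ ?_
  · simp only [subset_iff, mem_image, mem_compl]
    rintro _ ⟨B, hB, rfl⟩
    exact hfree A hA B hB
  · rw [card_image_of_injective _ (symmDiff_right_injective A), card_compl, Fintype.card_finset,
      Fintype.card_fin]
    omega

theorem symmDiff_mem_of_notMem (hfree : DeltaFree 𝒜) (hhalf : 2 ^ n ≤ 2 * #𝒜)
    {A H : Finset (Fin n)} (hA : A ∈ 𝒜) (hH : H ∉ 𝒜) : H ∆ A ∈ 𝒜 := by
  rw [← mem_compl, ← hfree.image_symmDiff_eq_compl hhalf hA, mem_image] at hH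
  obtain ⟨B, hB, rfl⟩ := hH
  rwa [symmDiff_symmDiff_self']

theorem exists_odd_card_notMem (hfree : DeltaFree 𝒜) (hn : 0 < n) {A₀ : Finset (Fin n)}
    (hA₀ : A₀ ∈ 𝒜) (hA₀even : Even #A₀) : ∃ H ∉ 𝒜, Odd #H := by
  by_contra! heven_of_notMem
  simp only [Nat.not_odd_iff_even] at heven_of_notMem
  have heven_of_mem : ∀ A ∈ 𝒜, Even #A := fun A hA => by
    have := heven_of_notMem _ (hfree A₀ hA₀ A hA)
    rwa [even_card_symmDiff_iff, iff_true_left hA₀even] at this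
  have hsingleton : ¬ Even #{(⟨0, hn⟩ : Fin n)} := by simp
  by_cases h : {(⟨0, hn⟩ : Fin n)} ∈ 𝒜
  · exact hsingleton (heven_of_mem _ h)
  · exact hsingleton (heven_of_notMem _ h)

theorem card_filter_even_eq_card_filter_odd (hfree : DeltaFree 𝒜) (hhalf : 2 ^ n ≤ 2 * #𝒜)
    (hn : 0 < n) {A₀ : Finset (Fin n)} (hA₀ : A₀ ∈ 𝒜) (hA₀even : Even #A₀) :
    #(𝒜.filter (fun A => Even #A)) = #(𝒜.filter (fun A => Odd #A)) := by
  obtain ⟨H, hH, hHodd⟩ := hfree.exists_odd_card_notMem hn hA₀ hA₀even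
  have hmem : ∀ A ∈ 𝒜, H ∆ A ∈ 𝒜 := fun A hA => hfree.symmDiff_mem_of_notMem hhalf hA hH
  have hparity : ∀ A, Even #(H ∆ A) ↔ Odd #A := fun A => by
    rw [even_card_symmDiff_iff, iff_false_left (Nat.not_even_iff_odd.mpr hHodd),
      Nat.not_even_iff_odd]
  refine card_nbij' (H ∆ ·) (H ∆ ·) ?_ ?_ (fun _ _ => symmDiff_symmDiff_cancel_left H _)
    (fun _ _ => symmDiff_symmDiff_cancel_left H _)
  · intro A hA
    obtain ⟨hA, hAeven⟩ := mem_filter.mp hA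
    exact mem_filter.mpr ⟨hmem A hA, by rwa [← Nat.not_even_iff_odd, hparity, Nat.not_odd_iff_even]⟩
  · intro A hA
    obtain ⟨hA, hAodd⟩ := mem_filter.mp hA
    exact mem_filter.mpr ⟨hmem A hA, (hparity A).mpr hAodd⟩

end DeltaFree

theorem stmt_7 (n : ℕ) (hn : 2 ≤ n) (𝒜 : Finset (Finset (Fin n)))
    (hfree : DeltaFree 𝒜) (hcard : 𝒜.card = 2 ^ (n - 1))
    (heven : ∃ A ∈ 𝒜, Even A.card) :
    (𝒜.filter (fun A => Even A.card)).card = 2 ^ (n - 2) ∧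
    (𝒜.filter (fun A => Odd A.card)).card = 2 ^ (n - 2) := by
  obtain ⟨A₀, hA₀, hA₀even⟩ := heven
  obtain ⟨m, rfl⟩ : ∃ m, n = m + 2 := ⟨n - 2, by omega⟩
  rw [show m + 2 - 1 = m + 1 by omega] at hcard
  rw [Nat.add_sub_cancel]
  have hhalf : 2 ^ (m + 2) ≤ 2 * #𝒜 := by rw [hcard, pow_succ' 2 (m + 1)]
  have hsplit := hfree.card_filter_even_eq_card_filter_odd hhalf (by omega) hA₀ hA₀even
  have htotal := card_filter_add_card_filter_not (s := 𝒜) (fun A => Even #A)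
  simp only [Nat.not_even_iff_odd] at htotal
  rw [hcard, pow_succ] at htotal
  omega
end

section
/- Let S^C be a proper subset of [n] (possibly empty, but S^C ≠ [n]). Then the family 𝒜(S^C), consisting of all subsets A of [n] such that either |A| is odd and |A ∩ S^C| is even, or |A| is even and |A ∩ S^C| is odd, is Δ-free. -/
/-- The family `𝒜(Sᶜ)` generated by a set `Sc ⊆ [n]`: all subsets `A` of `[n]` such
that either `|A|` is odd and `|A ∩ Sc|` is even, or `|A|` is even and `|A ∩ Sc|` is odd. -/
def genFamily {n : ℕ} (Sc : Finset (Fin n)) : Finset (Finset (Fin n)) :=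
  Finset.univ.filter (fun A =>
    (Odd A.card ∧ Even (A ∩ Sc).card) ∨ (Even A.card ∧ Odd (A ∩ Sc).card))

lemma card_symmDiff_aux {n : ℕ} (A B : Finset (Fin n)) :
    (symmDiff A B).card + 2 * (A ∩ B).card = A.card + B.card := by
  rw [symmDiff_def, Finset.sup_eq_union, Finset.card_union_of_disjoint disjoint_sdiff_sdiff]
  have h1 := Finset.card_sdiff_add_card_inter A B
  have h2 := Finset.card_sdiff_add_card_inter B A
  rw [Finset.inter_comm] at h2
  omega

lemma symmDiff_inter_aux {n : ℕ} (A B S : Finset (Fin n)) :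
    (symmDiff A B) ∩ S = symmDiff (A ∩ S) (B ∩ S) := by
  ext x; simp [symmDiff_def, Finset.mem_union]; tauto

lemma mem_genFamily_iff {n : ℕ} (Sc A : Finset (Fin n)) :
    A ∈ genFamily Sc ↔ Odd (A.card + (A ∩ Sc).card) := by
  simp only [genFamily, Finset.mem_filter, Finset.mem_univ, true_and,
    Nat.odd_iff, Nat.even_iff]
  omega
theorem stmt_8 (n : ℕ) (hn : 0 < n) (Sc : Finset (Fin n)) (hSc : Sc ≠ Finset.univ) :
    DeltaFree (genFamily Sc) := by
  intro A hA B hB hAB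
  rw [mem_genFamily_iff, Nat.odd_iff] at hA hB hAB
  have e1 := card_symmDiff_aux A B
  have e2 := card_symmDiff_aux (A ∩ Sc) (B ∩ Sc)
  rw [symmDiff_inter_aux] at hAB
  omega
end

section
/- Let n be a positive integer. Every Δ-free family 𝒜 of subsets of [n] with |𝒜| = 2^(n-1) contains at least one singleton set {j} for some j ∈ [n]. -/
theorem stmt_12 (n : ℕ) (hn : 0 < n) (𝒜 : Finset (Finset (Fin n)))
    (hfree : DeltaFree 𝒜) (hcard : 𝒜.card = 2 ^ (n - 1)) :
    ∃ j : Fin n, ({j} : Finset (Fin n)) ∈ 𝒜 := by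
  -- 𝒜 is nonempty
  have hne : 𝒜.Nonempty := by
    rw [← Finset.card_pos, hcard]; positivity
  obtain ⟨A₀, hA₀⟩ := hne
  -- card of complement
  have htot : Fintype.card (Finset (Fin n)) = 2 ^ n := by simp
  have hcompl : (𝒜ᶜ).card = 2 ^ (n - 1) := by
    rw [Finset.card_compl, htot, hcard]
    have : 2 ^ n = 2 ^ (n - 1) + 2 ^ (n - 1) := by
      rw [← two_mul, ← pow_succ']
      congr 1
      omega
    omega
  -- image of 𝒜 under symmDiff A₀ equals 𝒜ᶜ
  have hinj : Set.InjOn (fun B => symmDiff A₀ B) 𝒜 := by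
    intro x hx y hy hxy
    have : symmDiff A₀ (symmDiff A₀ x) = symmDiff A₀ (symmDiff A₀ y) := by
      simp only at hxy; rw [hxy]
    simpa [symmDiff_symmDiff_cancel_left] using this
  have hsub : 𝒜.image (fun B => symmDiff A₀ B) ⊆ 𝒜ᶜ := by
    intro C hC
    obtain ⟨B, hB, rfl⟩ := Finset.mem_image.mp hC
    simp only [Finset.mem_compl]
    exact hfree A₀ hA₀ B hB
  have himg : 𝒜.image (fun B => symmDiff A₀ B) = 𝒜ᶜ := by
    apply Finset.eq_of_subset_of_card_le hsub
    rw [Finset.card_image_of_injOn hinj, hcard, hcompl]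
  -- complement closed under symmDiff
  have hclosed : ∀ X ∉ 𝒜, ∀ Y ∉ 𝒜, symmDiff X Y ∉ 𝒜 := by
    intro X hX Y hY
    have hX' : X ∈ 𝒜ᶜ := Finset.mem_compl.mpr hX
    have hY' : Y ∈ 𝒜ᶜ := Finset.mem_compl.mpr hY
    rw [← himg] at hX' hY'
    obtain ⟨B, hB, rfl⟩ := Finset.mem_image.mp hX'
    obtain ⟨B', hB', rfl⟩ := Finset.mem_image.mp hY'
    have : symmDiff (symmDiff A₀ B) (symmDiff A₀ B') = symmDiff B B' := by
      ext x
      simp only [Finset.mem_symmDiff]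
      tauto
    rw [this]
    exact hfree B hB B' hB'
  -- suppose no singleton
  by_contra hno
  push_neg at hno
  have hall : ∀ X : Finset (Fin n), X ∉ 𝒜 := by
    intro X
    induction X using Finset.induction_on with
    | empty =>
        have := hfree A₀ hA₀ A₀ hA₀
        simpa [symmDiff_self] using this
    | @insert j Y hj ih =>
        have hins : insert j Y = symmDiff ({j} : Finset (Fin n)) Y := by
          ext x
          simp only [Finset.mem_insert, Finset.mem_symmDiff, Finset.mem_singleton]
          constructor
          · rintro (rfl | hx)
            · exact Or.inl ⟨rfl, fun h => hj h⟩
            · exact Or.inr ⟨hx, fun h => hj (h ▸ hx)⟩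
          · rintro (⟨rfl, _⟩ | ⟨hx, _⟩)
            · exact Or.inl rfl
            · exact Or.inr hx
        rw [hins]
        exact hclosed _ (hno j) _ ih
  exact absurd hA₀ (hall A₀)
end

section
/- Let n be a positive integer, let 𝒜 be a Δ-free family of subsets of [n] with |𝒜| = 2^(n-1), and let S^C = {j ∈ [n] : {j} ∉ 𝒜}. Then 𝒜 contains no set A with |A| even and |A ∩ S^C| even. -/
theorem stmt_13 (n : ℕ) (hn : 0 < n) (𝒜 : Finset (Finset (Fin n)))
    (hfree : DeltaFree 𝒜) (hcard : 𝒜.card = 2 ^ (n - 1))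
    (Sc : Finset (Fin n))
    (hSc : Sc = Finset.univ.filter (fun j => ({j} : Finset (Fin n)) ∉ 𝒜)) :
    ∀ A ∈ 𝒜, ¬(Even A.card ∧ Even (A ∩ Sc).card) := by
  subst hSc
  have hne : 𝒜.Nonempty := Finset.card_pos.1 (by rw [hcard]; positivity)
  have hcardC : 𝒜ᶜ.card = 2 ^ (n - 1) := by
    rw [Finset.card_compl, hcard]
    have h1 : Fintype.card (Finset (Fin n)) = 2 ^ n := by simp
    have h2 : 2 ^ n = 2 ^ (n - 1) + 2 ^ (n - 1) := by
      rw [← two_mul, ← pow_succ']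
      congr 1
      omega
    omega
  have key : ∀ A ∈ 𝒜, ∀ X, X ∉ 𝒜 → symmDiff A X ∈ 𝒜 := by
    intro A hA X hX
    have himg : 𝒜.image (fun Y => symmDiff A Y) ⊆ 𝒜ᶜ := by
      intro Z hZ
      simp only [Finset.mem_image] at hZ
      obtain ⟨Y, hY, rfl⟩ := hZ
      simpa using hfree A hA Y hY
    have hinj : Set.InjOn (fun Y => symmDiff A Y) 𝒜 := by
      intro a _ b _ h
      have := congrArg (fun Z => symmDiff A Z) h
      simpa [symmDiff_symmDiff_cancel_left] using this
    have hcardimg : (𝒜.image (fun Y => symmDiff A Y)).card = 2 ^ (n - 1) := by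
      rw [Finset.card_image_of_injOn hinj, hcard]
    have heq : 𝒜.image (fun Y => symmDiff A Y) = 𝒜ᶜ :=
      Finset.eq_of_subset_of_card_le himg (by rw [hcardimg, hcardC])
    have hX' : X ∈ 𝒜ᶜ := Finset.mem_compl.2 hX
    rw [← heq, Finset.mem_image] at hX'
    obtain ⟨Y, hY, hXY⟩ := hX'
    have hAX : symmDiff A X = Y := by
      rw [← hXY]; simp [symmDiff_symmDiff_cancel_left]
    rwa [hAX]
  have hxor : ∀ X Y : Finset (Fin n),
      (symmDiff X Y ∈ 𝒜 ↔ ¬(X ∈ 𝒜 ↔ Y ∈ 𝒜)) := by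
    intro X Y
    by_cases hX : X ∈ 𝒜 <;> by_cases hY : Y ∈ 𝒜
    · simp [hX, hY, hfree X hX Y hY]
    · simp [hX, hY, key X hX Y hY]
    · have := key Y hY X hX
      rw [symmDiff_comm] at this
      simp [hX, hY, this]
    · obtain ⟨A, hA⟩ := hne
      have h1 : symmDiff A X ∈ 𝒜 := key A hA X hX
      have h2 : symmDiff A Y ∈ 𝒜 := key A hA Y hY
      have h3 := hfree _ h1 _ h2
      have h4 : symmDiff (symmDiff A X) (symmDiff A Y) = symmDiff X Y := by
        rw [symmDiff_assoc, symmDiff_left_comm, symmDiff_symmDiff_cancel_left]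
      rw [h4] at h3
      simp [hX, hY, h3]
  have hempty : (∅ : Finset (Fin n)) ∉ 𝒜 := by
    intro h
    have := hfree ∅ h ∅ h
    simp at this
    exact this h
  have hchi : ∀ A : Finset (Fin n),
      (A ∈ 𝒜 ↔ Odd ((A.filter (fun j => ({j} : Finset (Fin n)) ∈ 𝒜)).card)) := by
    intro A
    induction A using Finset.induction with
    | empty => simp [hempty]
    | @insert a A ha ih =>
      have hins : insert a A = symmDiff ({a} : Finset (Fin n)) A := by
        ext x
        simp only [Finset.mem_insert, Finset.mem_symmDiff, Finset.mem_singleton]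
        constructor
        · rintro (rfl | hx)
          · exact Or.inl ⟨rfl, ha⟩
          · exact Or.inr ⟨hx, fun h => ha (h ▸ hx)⟩
        · rintro (⟨rfl, _⟩ | ⟨hx, _⟩)
          · exact Or.inl rfl
          · exact Or.inr hx
      rw [hins, hxor, ih, ← hins]
      by_cases hs : ({a} : Finset (Fin n)) ∈ 𝒜
      · rw [Finset.filter_insert, if_pos hs,
          Finset.card_insert_of_notMem (fun h => ha (Finset.mem_of_mem_filter a h)),
          Nat.odd_add_one, Nat.not_odd_iff_even]
        simp [hs]
      · rw [Finset.filter_insert, if_neg hs]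
        simp [hs]
  intro A hA ⟨heA, heI⟩
  have hodd := (hchi A).1 hA
  have hinter : A ∩ Finset.univ.filter (fun j => ({j} : Finset (Fin n)) ∉ 𝒜) =
      A.filter (fun j => ({j} : Finset (Fin n)) ∉ 𝒜) := by
    ext x; simp [Finset.mem_filter, and_comm]
  rw [hinter] at heI
  have hsplit := Finset.card_filter_add_card_filter_not
    (s := A) (p := fun j => ({j} : Finset (Fin n)) ∈ 𝒜)
  simp only [Nat.odd_iff] at hodd
  simp only [Nat.even_iff] at heA heI
  have : (A.filter (fun j => ¬ ({j} : Finset (Fin n)) ∈ 𝒜)).card =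
      (A.filter (fun j => ({j} : Finset (Fin n)) ∉ 𝒜)).card := rfl
  omega
end

section
/- Let n be a positive integer, let 𝒜 be a Δ-free family of subsets of [n] with |𝒜| = 2^(n-1), and let S^C = {j ∈ [n] : {j} ∉ 𝒜}. Then 𝒜 contains no set A with |A| odd and |A ∩ S^C| odd. -/
lemma symmDiff_aux {n : ℕ} (a b c : Finset (Fin n)) :
    symmDiff (symmDiff a b) (symmDiff a c) = symmDiff b c := by
  ext x; simp only [Finset.mem_symmDiff]; tauto

theorem stmt_14 (n : ℕ) (hn : 0 < n) (𝒜 : Finset (Finset (Fin n)))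
    (hfree : DeltaFree 𝒜) (hcard : 𝒜.card = 2 ^ (n - 1))
    (Sc : Finset (Fin n))
    (hSc : Sc = Finset.univ.filter (fun j => ({j} : Finset (Fin n)) ∉ 𝒜)) :
    ∀ A ∈ 𝒜, ¬(Odd A.card ∧ Odd (A ∩ Sc).card) := by
  classical
  have hne : 𝒜.Nonempty := by
    rw [← Finset.card_pos, hcard]; positivity
  obtain ⟨a0, ha0⟩ := hne
  have hempty : (∅ : Finset (Fin n)) ∉ 𝒜 := by
    have := hfree a0 ha0 a0 ha0
    rwa [symmDiff_self, Finset.bot_eq_empty] at this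
  set V := 𝒜.image (fun b => symmDiff a0 b) with hV
  have hVcard : V.card = 2 ^ (n - 1) := by
    rw [hV, Finset.card_image_of_injective _ (symmDiff_right_injective a0), hcard]
  have hdisj : Disjoint 𝒜 V := by
    rw [Finset.disjoint_right]
    intro v hv hv'
    obtain ⟨b, hb, rfl⟩ := Finset.mem_image.mp hv
    exact hfree a0 ha0 b hb hv'
  have hunion : 𝒜 ∪ V = Finset.univ := by
    apply Finset.eq_univ_of_card
    rw [Finset.card_union_of_disjoint hdisj, hcard, hVcard,
      Fintype.card_finset, Fintype.card_fin]
    have h2 : (2:ℕ) ^ (n-1) + 2 ^ (n-1) = 2 ^ (n-1) * 2 := by ring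
    rw [h2, ← pow_succ]
    congr 1
    omega
  have hmemV : ∀ v, v ∉ 𝒜 → ∃ b ∈ 𝒜, v = symmDiff a0 b := by
    intro v hv
    have hv2 : v ∈ V := by
      have := Finset.mem_univ v
      rw [← hunion, Finset.mem_union] at this
      tauto
    obtain ⟨b, hb, h⟩ := Finset.mem_image.mp hv2
    exact ⟨b, hb, h.symm⟩
  -- the key "character" property
  have keyPos : ∀ u v : Finset (Fin n), u ∈ 𝒜 → v ∉ 𝒜 → symmDiff u v ∈ 𝒜 := by
    intro u v hu hv
    by_contra h
    obtain ⟨b, hb, hb'⟩ := hmemV _ h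
    obtain ⟨c, hc, hc'⟩ := hmemV _ hv
    have hu' : u = symmDiff (symmDiff u v) v := by
      rw [symmDiff_assoc, symmDiff_self, symmDiff_bot]
    rw [hb', hc', symmDiff_aux] at hu'
    exact hfree b hb c hc (hu' ▸ hu)
  have keyNeg : ∀ u v : Finset (Fin n), u ∉ 𝒜 → v ∉ 𝒜 → symmDiff u v ∉ 𝒜 := by
    intro u v hu hv
    obtain ⟨b, hb, rfl⟩ := hmemV _ hu
    obtain ⟨c, hc, rfl⟩ := hmemV _ hv
    rw [symmDiff_aux]
    exact hfree b hb c hc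
  set χ : Finset (Fin n) → ZMod 2 := fun A => if A ∈ 𝒜 then 1 else 0 with hχ
  have hadd : ∀ u v, χ (symmDiff u v) = χ u + χ v := by
    intro u v
    by_cases hu : u ∈ 𝒜 <;> by_cases hv : v ∈ 𝒜
    · have h := hfree u hu v hv
      simp [hχ, hu, hv, h]
      decide
    · have h := keyPos u v hu hv
      simp [hχ, hu, hv, h]
    · have h := keyPos v u hv hu
      rw [symmDiff_comm] at h
      simp [hχ, hu, hv, h]
    · have h := keyNeg u v hu hv
      simp [hχ, hu, hv, h]
  have hsum : ∀ A : Finset (Fin n), χ A = ∑ j ∈ A, χ {j} := by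
    intro A
    induction A using Finset.induction_on with
    | empty => simp [hχ, hempty]
    | @insert j s hj ih =>
      have h1 : insert j s = symmDiff {j} s := by
        ext x
        simp only [Finset.mem_symmDiff, Finset.mem_insert, Finset.mem_singleton]
        constructor
        · rintro (rfl | hx)
          · exact Or.inl ⟨rfl, hj⟩
          · right; exact ⟨hx, fun h => hj (h ▸ hx)⟩
        · rintro (⟨rfl, _⟩ | ⟨hx, _⟩)
          · exact Or.inl rfl
          · exact Or.inr hx
      rw [Finset.sum_insert hj, ← ih, ← hadd, ← h1]
  intro A hA ⟨hodd, hoddSc⟩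
  have hχj : ∀ j : Fin n, χ {j} = if j ∈ Sc then 0 else 1 := by
    intro j
    by_cases h : ({j} : Finset (Fin n)) ∈ 𝒜 <;> simp [hχ, hSc, h]
  have h1 : (1 : ZMod 2) = ∑ j ∈ A, χ {j} := by
    rw [← hsum]; simp [hχ, hA]
  rw [Finset.sum_congr rfl (fun j _ => hχj j), Finset.sum_ite, Finset.sum_const_zero,
    zero_add, Finset.sum_const, nsmul_eq_mul, mul_one] at h1
  -- card relation
  have hsplit : (A.filter (fun j => j ∈ Sc)).card + (A.filter (fun j => ¬ j ∈ Sc)).card = A.card :=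
    Finset.card_filter_add_card_filter_not _
  have hinter : A.filter (fun j => j ∈ Sc) = A ∩ Sc := by
    ext x; simp [Finset.mem_inter, Finset.mem_filter]
  rw [hinter] at hsplit
  set m := (A.filter (fun j => ¬ j ∈ Sc)).card with hm
  have heven : m % 2 = 0 := by
    obtain ⟨k, hk⟩ := hodd
    obtain ⟨l, hl⟩ := hoddSc
    omega
  have h0 : (m : ZMod 2) = 0 := by
    rw [ZMod.natCast_eq_zero_iff]
    omega
  rw [h0] at h1
  exact one_ne_zero h1
end

section
/- Let n be a positive integer and let 𝒜 be a Δ-free family of subsets of [n] with |𝒜| = 2^(n-1). Setting S^C = {j ∈ [n] : {j} ∉ 𝒜}, the family 𝒜 equals 𝒜(S^C), i.e., 𝒜 consists exactly of those subsets A of [n] for which either |A| is odd and |A ∩ S^C| is even, or |A| is even and |A ∩ S^C| is odd. -/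
theorem stmt_15 (n : ℕ) (hn : 0 < n) (𝒜 : Finset (Finset (Fin n)))
    (hfree : DeltaFree 𝒜) (hcard : 𝒜.card = 2 ^ (n - 1))
    (Sc : Finset (Fin n))
    (hSc : Sc = Finset.univ.filter (fun j => ({j} : Finset (Fin n)) ∉ 𝒜)) :
    𝒜 = genFamily Sc := by
  have hAne : 𝒜.Nonempty := by
    rw [← Finset.card_pos, hcard]; positivity
  obtain ⟨a₀, ha₀⟩ := hAne
  have hempty : (∅ : Finset (Fin n)) ∉ 𝒜 := by
    intro h
    have := hfree ∅ h ∅ h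
    simp at this
    exact this h
  have huniv : (Finset.univ : Finset (Finset (Fin n))).card = 2 ^ n := by
    simp [Finset.card_univ]
  have hcompl : (Finset.univ \ 𝒜).card = 2 ^ (n - 1) := by
    rw [Finset.card_sdiff_of_subset (Finset.subset_univ _), huniv, hcard]
    have h2 : 2 ^ n = 2 ^ (n - 1) + 2 ^ (n - 1) := by
      rw [← two_mul, ← pow_succ']
      congr 1; omega
    omega
  -- Key lemma: for a ∈ 𝒜 and any x, a Δ x ∈ 𝒜 ↔ x ∉ 𝒜.
  have L : ∀ a ∈ 𝒜, ∀ x : Finset (Fin n), symmDiff a x ∈ 𝒜 ↔ x ∉ 𝒜 := by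
    intro a ha x
    constructor
    · intro h hx
      have heq : symmDiff (symmDiff a x) x = a := by
        rw [symmDiff_assoc, symmDiff_self, symmDiff_bot]
      exact hfree _ h _ hx (by rwa [heq])
    · intro hx
      have hinj : Function.Injective (fun b : Finset (Fin n) => symmDiff a b) := by
        intro u v huv
        have := congrArg (fun z => symmDiff a z) huv
        simpa [symmDiff_symmDiff_cancel_left] using this
      have himg : 𝒜.image (fun b => symmDiff a b) = Finset.univ \ 𝒜 := by
        apply Finset.eq_of_subset_of_card_le
        · intro y hy
          simp only [Finset.mem_image] at hy
          obtain ⟨b, hb, rfl⟩ := hy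
          simp only [Finset.mem_sdiff, Finset.mem_univ, true_and]
          exact hfree a ha b hb
        · rw [Finset.card_image_of_injective _ hinj, hcard, hcompl]
      have hx' : x ∈ 𝒜.image (fun b => symmDiff a b) := by
        rw [himg]; simp [hx]
      simp only [Finset.mem_image] at hx'
      obtain ⟨b, hb, hbe⟩ := hx'
      have : symmDiff a x = b := by
        rw [← hbe, symmDiff_symmDiff_cancel_left]
      rwa [this]
  -- The complement of 𝒜 is closed under symmetric difference.
  have Hcl : ∀ x ∉ 𝒜, ∀ y ∉ 𝒜, symmDiff x y ∉ 𝒜 := by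
    intro x hx y hy
    have hx' : symmDiff a₀ x ∈ 𝒜 := (L a₀ ha₀ x).mpr hx
    have hy' : symmDiff a₀ y ∈ 𝒜 := (L a₀ ha₀ y).mpr hy
    have h := hfree _ hx' _ hy'
    have heq : symmDiff (symmDiff a₀ x) (symmDiff a₀ y) = symmDiff x y := by
      ext i
      simp only [Finset.mem_symmDiff]
      tauto
    rwa [heq] at h
  have hmemSc : ∀ j : Fin n, j ∈ Sc ↔ ({j} : Finset (Fin n)) ∉ 𝒜 := by
    intro j; simp [hSc]
  -- Main characterization by induction on A.
  have main : ∀ A : Finset (Fin n), (A ∈ 𝒜 ↔ Odd (A.card + (A ∩ Sc).card)) := by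
    intro A
    induction A using Finset.induction_on with
    | empty => simp [hempty]
    | @insert j A' hjA ih =>
      have hins : insert j A' = symmDiff ({j} : Finset (Fin n)) A' := by
        ext i
        by_cases h : i = j <;>
          simp [Finset.mem_symmDiff, h, hjA]
      have hcard1 : (insert j A').card = A'.card + 1 :=
        Finset.card_insert_of_notMem hjA
      by_cases hj : j ∈ Sc
      · -- {j} ∉ 𝒜; membership unchanged, both parities flip
        have hjA' : ({j} : Finset (Fin n)) ∉ 𝒜 := (hmemSc j).mp hj
        have hcard2 : (insert j A' ∩ Sc).card = (A' ∩ Sc).card + 1 := by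
          rw [Finset.insert_inter_of_mem hj,
            Finset.card_insert_of_notMem (by simp [hjA])]
        have hstep : insert j A' ∈ 𝒜 ↔ A' ∈ 𝒜 := by
          constructor
          · intro h
            by_contra hA'
            exact Hcl _ hjA' _ hA' (hins ▸ h)
          · intro h
            by_contra hA
            have := Hcl _ hjA' _ hA
            rw [hins, symmDiff_symmDiff_cancel_left] at this
            exact this h
        rw [hstep, ih, hcard1, hcard2]
        simp only [Nat.odd_iff]
        omega
      · -- {j} ∈ 𝒜; membership flips, card parity flips, intersection unchanged
        have hjA' : ({j} : Finset (Fin n)) ∈ 𝒜 := by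
          by_contra h
          exact hj ((hmemSc j).mpr h)
        have hcard2 : (insert j A' ∩ Sc).card = (A' ∩ Sc).card := by
          rw [Finset.insert_inter_of_notMem hj]
        have hstep : insert j A' ∈ 𝒜 ↔ A' ∉ 𝒜 := by
          rw [hins]; exact L _ hjA' A'
        rw [hstep, ih, hcard1, hcard2]
        simp only [Nat.odd_iff]
        omega
  ext A
  simp only [genFamily, Finset.mem_filter, Finset.mem_univ, true_and]
  rw [main A]
  simp only [Nat.odd_iff, Nat.even_iff]
  omega
end

section
/- The map sending a proper subset S^C of [n] to the family 𝒜(S^C) is injective on proper subsets of [n]; that is, if S₁ and S₂ are proper subsets of [n] with 𝒜(S₁) = 𝒜(S₂), then S₁ = S₂. -/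
theorem stmt_17 (n : ℕ) (hn : 0 < n) (S₁ S₂ : Finset (Fin n))
    (h₁ : S₁ ≠ Finset.univ) (h₂ : S₂ ≠ Finset.univ)
    (h : genFamily S₁ = genFamily S₂) : S₁ = S₂ := by
  ext x
  have hx := Finset.ext_iff.mp h {x}
  simp only [genFamily, Finset.mem_filter, Finset.mem_univ, true_and] at hx
  by_cases h1 : x ∈ S₁ <;> by_cases h2 : x ∈ S₂ <;>
    simp_all [Finset.singleton_inter_of_mem, Finset.singleton_inter_of_notMem,
      Nat.odd_iff, Nat.even_iff]
end
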